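/- Let K ≥ 1, set 𝒦 = {−K,…,K} and m = 2K+1. Let {(x_i,v_i)}_{i=1}^m be m distinct particles in Ω and {(g_j,w_j)}_{j=1}^m be m pairwise distinct points of Ω, disjoint from the particles. Suppose that for every k ∈ 𝒦 the positions x_i + kτv_i (i = 1,…,m) are pairwise distinct, and for every k ∈ 𝒦 and every i ∈ {1,…,m} there exists exactly one index j ∈ {1,…,m} with g_j − x_i + kτ(w_j − v_i) = 0. Let w_1,…,w_m > 0 and ω = Σ_{i=1}^m w_i δ_{(x_i,v_i)}. Then for every β ∈ [0, min_i w_i], the measure ω_β = Σ_{i=1}^m (w_i − β) δ_{(x_i,v_i)} + β Σ_{j=1}^m δ_{(g_j,w_j)} satisfies 𝒢ω_β = 𝒢ω and ‖ω_β‖_TV = ‖ω‖_TV. -/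

import Mathlib

open MeasureTheory Complex Real Set

noncomputable section

/-- Phase space: positions and velocities in `ℝ^d`. -/
abbrev PS (d : ℕ) := (Fin d → ℝ) × (Fin d → ℝ)

/-- The phase-space domain `Ω`. -/
def Omega (d K : ℕ) (τ : ℝ) : Set (PS d) :=
  {p | ∀ k : ℤ, |k| ≤ (K : ℤ) → ∀ j, p.1 j + (k : ℝ) * τ * p.2 j ∈ Set.Icc (0 : ℝ) 1}

/-- The affine set `L_{i,k}` attached to a particle `p₀` and a time sample `k`. -/
def Lset (d K : ℕ) (τ : ℝ) (p₀ : PS d) (k : ℤ) : Set (PS d) :=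
  {p ∈ Omega d K τ | ∀ j, (p.1 j - p₀.1 j) + (k : ℝ) * τ * (p.2 j - p₀.2 j) = 0}

/-- `g` is a ghost particle of the configuration `P` with respect to the
set of time samples `Ks`. -/
def IsGhost {d K N : ℕ} (τ : ℝ) (P : Fin N → PS d) (Ks : Finset ℤ) (g : PS d) : Prop :=
  g ∈ Omega d K τ ∧ ∃ ι : ℤ → Fin N, Set.InjOn ι (Ks : Set ℤ) ∧
    (⋂ k ∈ Ks, Lset d K τ (P (ι k)) k) = {g}

/-- Integral of a complex function against a complex measure, via the Jordan
decompositions of the real and imaginary parts. -/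
def cintegral {α : Type*} [MeasurableSpace α] (μ : ComplexMeasure α) (f : α → ℂ) : ℂ :=
  ((∫ x, f x ∂(ComplexMeasure.re μ).toJordanDecomposition.posPart)
      - ∫ x, f x ∂(ComplexMeasure.re μ).toJordanDecomposition.negPart)
    + Complex.I * ((∫ x, f x ∂(ComplexMeasure.im μ).toJordanDecomposition.posPart)
      - ∫ x, f x ∂(ComplexMeasure.im μ).toJordanDecomposition.negPart)

/-- The total variation norm of a complex measure, defined by duality against
continuous functions bounded by one. -/
def tvNorm {α : Type*} [MeasurableSpace α] [TopologicalSpace α] (μ : ComplexMeasure α) : ℝ :=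
  sSup {r | ∃ f : α → ℂ, Continuous f ∧ (∀ x, ‖f x‖ ≤ 1) ∧ r = ‖cintegral μ f‖}

/-- A complex measure is supported on a set `S` if it vanishes on measurable sets
disjoint from `S`. -/
def SupportedOn {α : Type*} [MeasurableSpace α] (μ : ComplexMeasure α) (S : Set α) : Prop :=
  ∀ t : Set α, MeasurableSet t → Disjoint t S → μ t = 0

/-- The Dirac measure at a point, as a complex measure. -/
def cdirac {α : Type*} [MeasurableSpace α] (a : α) : ComplexMeasure α :=
  (MeasureTheory.Measure.dirac a).toSignedMeasure.toComplexMeasure 0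

/-- The test function `p ↦ e^{-2πi l·(x + kτv)}`. -/
def testFn (d : ℕ) (τ : ℝ) (l : Fin d → ℤ) (k : ℤ) : PS d → ℂ :=
  fun p => Complex.exp (-(2 * (π : ℂ) * Complex.I) *
    ∑ j, (l j : ℂ) * ((p.1 j : ℂ) + (k : ℂ) * (τ : ℂ) * (p.2 j : ℂ)))

/-- The measurement `(𝒢 μ)_{l,k}`. -/
def Gmeas {d : ℕ} (τ : ℝ) (μ : ComplexMeasure (PS d)) (l : Fin d → ℤ) (k : ℤ) : ℂ :=
  cintegral μ (testFn d τ l k)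

/-- Two complex measures give the same measurements for all allowed frequencies
`‖l‖_∞ ≤ f_c` and time samples `|k| ≤ K`. -/
def SameMeas {d : ℕ} (K : ℕ) (τ : ℝ) (f_c : ℕ) (μ ν : ComplexMeasure (PS d)) : Prop :=
  ∀ l : Fin d → ℤ, (∀ j, |l j| ≤ (f_c : ℤ)) → ∀ k : ℤ, |k| ≤ (K : ℤ) →
    Gmeas τ μ l k = Gmeas τ ν l k

/-- The set of allowed frequencies `l ∈ ℤ^d`, `‖l‖_∞ ≤ f_c`. -/
def freqSet (d : ℕ) (f_c : ℕ) : Finset (Fin d → ℤ) :=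
  Fintype.piFinset fun _ => Finset.Icc (-(f_c : ℤ)) (f_c : ℤ)

/-- A function on phase space has dynamical form. -/
def DynamicalForm (d K : ℕ) (τ : ℝ) (f_c : ℕ) (q : PS d → ℂ) : Prop :=
  ∃ c : ℤ → (Fin d → ℤ) → ℂ, ∀ p : PS d,
    q p = ∑ k ∈ Finset.Icc (-(K : ℤ)) (K : ℤ), ∑ l ∈ freqSet d f_c,
      c k l * Complex.exp ((2 * (π : ℂ) * Complex.I) *
        ∑ j, (l j : ℂ) * ((p.1 j : ℂ) + (k : ℂ) * (τ : ℂ) * (p.2 j : ℂ)))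

/-- The canonical embedding of `𝕂` (either `ℝ` or `ℂ`) into `ℂ`. -/
def toC {𝕜 : Type*} [RCLike 𝕜] (a : 𝕜) : ℂ :=
  (RCLike.re a : ℝ) + (RCLike.im a : ℝ) * Complex.I

/-! At each time sample `k`, every particle shares its position with a ghost and distinct
particles have distinct positions; as there are as many ghosts as particles, the ghosts occupy
exactly the positions of the particles, each once. The measurement `(𝒢 μ)_{l,k}` only sees
positions at time `k`, so moving mass `β` from every particle onto the ghosts leaves it unchanged.
Both measures have nonnegative weights, hence total variation equal to their total mass, which
the move preserves. -/

open Function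

section DiscreteMeasure

variable {α ι : Type*} [MeasurableSpace α] [Fintype ι]

theorem MeasureTheory.Measure.toSignedMeasure_toJordanDecomposition (ν : Measure α)
    [IsFiniteMeasure ν] :
    ν.toSignedMeasure.toJordanDecomposition = ⟨ν, 0, .zero_right⟩ :=
  SignedMeasure.toJordanDecomposition_eq <| by
    simp [JordanDecomposition.toSignedMeasure, Measure.toSignedMeasure_zero]

theorem cintegral_toComplexMeasure (ν : Measure α) [IsFiniteMeasure ν] (f : α → ℂ) :
    cintegral (ν.toSignedMeasure.toComplexMeasure 0) f = ∫ x, f x ∂ν := by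
  rw [cintegral, SignedMeasure.re_toComplexMeasure, SignedMeasure.im_toComplexMeasure,
    SignedMeasure.toJordanDecomposition_zero, ν.toSignedMeasure_toJordanDecomposition]
  simp

def weightedDirac (c : ι → ℝ) (p : ι → α) : Measure α :=
  ∑ i, ENNReal.ofReal (c i) • Measure.dirac (p i)

variable (c : ι → ℝ) (p : ι → α)

instance : IsFiniteMeasure (weightedDirac c p) :=
  ⟨by simp [weightedDirac, Measure.finsetSum_apply, ENNReal.sum_lt_top]⟩

variable {c}

theorem weightedDirac_real_apply (hc : 0 ≤ c) (t : Set α) :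
    (weightedDirac c p).real t = ∑ i, c i * (Measure.dirac (p i)).real t := by
  simp only [weightedDirac, measureReal_def, Measure.finsetSum_apply, Measure.smul_apply,
    smul_eq_mul]
  rw [ENNReal.toReal_sum fun i _ => by finiteness]
  simp [ENNReal.toReal_ofReal (hc _)]

theorem integral_weightedDirac {E : Type*} [NormedAddCommGroup E] [NormedSpace ℝ E]
    [CompleteSpace E] (hc : 0 ≤ c) {f : α → E} (hf : StronglyMeasurable f) :
    ∫ x, f x ∂weightedDirac c p = ∑ i, c i • f (p i) := by
  rw [weightedDirac, integral_finsetSum_measure fun i _ => ?_]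
  · simp [integral_smul_measure, integral_dirac' f _ hf, ENNReal.toReal_ofReal (hc _)]
  · exact (integrable_dirac' hf enorm_lt_top).smul_measure ENNReal.ofReal_ne_top

theorem sum_smul_cdirac_eq_toComplexMeasure (hc : 0 ≤ c) :
    ∑ i, (c i : ℂ) • cdirac (p i) = (weightedDirac c p).toSignedMeasure.toComplexMeasure 0 := by
  ext t ht
  apply Complex.ext <;>
    simp [cdirac, SignedMeasure.toComplexMeasure_apply, ht, weightedDirac_real_apply p hc,
      Complex.re_sum, Complex.im_sum]

theorem cintegral_sum_smul_cdirac (hc : 0 ≤ c) {f : α → ℂ} (hf : StronglyMeasurable f) :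
    cintegral (∑ i, (c i : ℂ) • cdirac (p i)) f = ∑ i, (c i : ℂ) * f (p i) := by
  simp [sum_smul_cdirac_eq_toComplexMeasure p hc, cintegral_toComplexMeasure,
    integral_weightedDirac p hc hf, Complex.real_smul]

theorem tvNorm_sum_smul_cdirac [TopologicalSpace α] [OpensMeasurableSpace α] (hc : 0 ≤ c) :
    tvNorm (∑ i, (c i : ℂ) • cdirac (p i)) = ∑ i, c i := by
  refine IsGreatest.csSup_eq ⟨⟨fun _ => 1, continuous_const, fun _ => by simp, ?_⟩, ?_⟩
  · rw [cintegral_sum_smul_cdirac p hc stronglyMeasurable_const]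
    simp only [mul_one]
    norm_cast
    rw [Real.norm_of_nonneg (Finset.sum_nonneg fun i _ => hc i)]
  · rintro _ ⟨f, hf, hf1, rfl⟩
    rw [cintegral_sum_smul_cdirac p hc hf.stronglyMeasurable]
    refine (norm_sum_le _ _).trans (Finset.sum_le_sum fun i _ => ?_)
    calc ‖(c i : ℂ) * f (p i)‖ = c i * ‖f (p i)‖ := by
          rw [norm_mul, Complex.norm_real, Real.norm_of_nonneg (hc i)]
      _ ≤ c i := mul_le_of_le_one_right (hc i) (hf1 _)

end DiscreteMeasure

section Ghosts

variable {d : ℕ}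

def position (τ : ℝ) (k : ℤ) (p : PS d) : Fin d → ℝ :=
  fun j => p.1 j + k * τ * p.2 j

variable {τ : ℝ}

theorem continuous_testFn (l : Fin d → ℤ) (k : ℤ) : Continuous (testFn d τ l k) := by
  unfold testFn
  fun_prop

theorem testFn_eq_of_position_eq {k : ℤ} {p q : PS d} (h : position τ k p = position τ k q)
    (l : Fin d → ℤ) : testFn d τ l k p = testFn d τ l k q := by
  have hj (j : Fin d) : (p.1 j : ℂ) + k * τ * p.2 j = q.1 j + k * τ * q.2 j := by
    exact_mod_cast congrFun h j
  simp only [testFn, hj]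

theorem sum_testFn_eq_of_matching {ι : Type*} [Fintype ι] {P G : ι → PS d} {k : ℤ}
    (hP : Injective (position τ k ∘ P))
    (hmatch : ∀ i, ∃ j, position τ k (G j) = position τ k (P i)) (l : Fin d → ℤ) :
    ∑ j, testFn d τ l k (G j) = ∑ i, testFn d τ l k (P i) := by
  choose σ hσ using hmatch
  have hσ_inj : Injective σ := fun i i' h => hP <| by simp only [comp_apply, ← hσ, h]
  exact (Fintype.sum_bijective σ (Finite.injective_iff_bijective.1 hσ_inj) _ _
    fun i => (testFn_eq_of_position_eq (hσ i) l).symm).symm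

end Ghosts

theorem ghost_perturbation_same_measurements_and_tv_general
    {d K : ℕ} (τ : ℝ) (f_c : ℕ)
    (P G : Fin (2 * K + 1) → PS d)
    (hpos : ∀ k ∈ Finset.Icc (-(K : ℤ)) (K : ℤ), ∀ i i' : Fin (2 * K + 1), i ≠ i' →
      (fun j => (P i).1 j + (k : ℝ) * τ * (P i).2 j) ≠
        (fun j => (P i').1 j + (k : ℝ) * τ * (P i').2 j))
    (huniq : ∀ k ∈ Finset.Icc (-(K : ℤ)) (K : ℤ), ∀ i : Fin (2 * K + 1),
      ∃! j' : Fin (2 * K + 1), ∀ j,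
        (G j').1 j - (P i).1 j + (k : ℝ) * τ * ((G j').2 j - (P i).2 j) = 0)
    (w : Fin (2 * K + 1) → ℝ)
    (β : ℝ) (hβ0 : 0 ≤ β) (hβ1 : ∀ i, β ≤ w i) :
    SameMeas K τ f_c
        ((∑ i, ((w i - β : ℝ) : ℂ) • cdirac (P i)) + ∑ j, ((β : ℝ) : ℂ) • cdirac (G j))
        (∑ i, ((w i : ℂ)) • cdirac (P i)) ∧
      tvNorm ((∑ i, ((w i - β : ℝ) : ℂ) • cdirac (P i)) + ∑ j, ((β : ℝ) : ℂ) • cdirac (G j))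
        = tvNorm (∑ i, ((w i : ℂ)) • cdirac (P i)) := by
  set c := Sum.elim (fun i => w i - β) fun _ => β
  have hc : 0 ≤ c := by
    rintro (i | j)
    exacts [sub_nonneg.2 (hβ1 i), hβ0]
  have hw : 0 ≤ w := fun i => hβ0.trans (hβ1 i)
  have hωβ : (∑ i, ((w i - β : ℝ) : ℂ) • cdirac (P i)) + ∑ j, ((β : ℝ) : ℂ) • cdirac (G j) =
      ∑ x, (c x : ℂ) • cdirac (Sum.elim P G x) := by
    rw [Fintype.sum_sum_type]
    rfl
  rw [hωβ]
  refine ⟨fun l _ k hk => ?_, ?_⟩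
  · have hk' : k ∈ Finset.Icc (-(K : ℤ)) K := Finset.mem_Icc.2 (abs_le.1 hk)
    have hsum : ∑ j, testFn d τ l k (G j) = ∑ i, testFn d τ l k (P i) :=
      sum_testFn_eq_of_matching
        (fun i i' h => Classical.byContradiction fun hne => hpos k hk' i i' hne h)
        (fun i => (huniq k hk' i).exists.imp fun j hj => funext fun m => by
          simp only [position]; linear_combination hj m) l
    have hT := (continuous_testFn (τ := τ) l k).stronglyMeasurable
    rw [Gmeas, Gmeas, cintegral_sum_smul_cdirac _ hc hT, cintegral_sum_smul_cdirac _ hw hT,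
      Fintype.sum_sum_type]
    simp only [c, Sum.elim_inl, Sum.elim_inr]
    rw [← Finset.mul_sum, hsum, Finset.mul_sum, ← Finset.sum_add_distrib]
    refine Finset.sum_congr rfl fun i _ => ?_
    push_cast
    ring
  · rw [tvNorm_sum_smul_cdirac _ hc, tvNorm_sum_smul_cdirac _ hw, Fintype.sum_sum_type]
    simp [c]

/-- For matched particles and ghost points, every measure
`ω_β = ∑ (w_i − β) δ_{(x_i,v_i)} + β ∑ δ_{(g_j,w_j)}` with `β ∈ [0, min_i w_i]` produces
the same measurements as `ω` and has the same total variation norm. -/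
theorem ghost_perturbation_same_measurements_and_tv
    {d K : ℕ} (hd : 1 ≤ d) (hK : 1 ≤ K) (τ : ℝ) (hτ : 0 < τ) (f_c : ℕ)
    (P G : Fin (2 * K + 1) → PS d)
    (hPmem : ∀ i, P i ∈ Omega d K τ) (hPdist : Function.Injective P)
    (hGmem : ∀ j, G j ∈ Omega d K τ) (hGdist : Function.Injective G)
    (hdisj : Disjoint (Set.range P) (Set.range G))
    (hpos : ∀ k ∈ Finset.Icc (-(K : ℤ)) (K : ℤ), ∀ i i' : Fin (2 * K + 1), i ≠ i' →
      (fun j => (P i).1 j + (k : ℝ) * τ * (P i).2 j) ≠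
        (fun j => (P i').1 j + (k : ℝ) * τ * (P i').2 j))
    (huniq : ∀ k ∈ Finset.Icc (-(K : ℤ)) (K : ℤ), ∀ i : Fin (2 * K + 1),
      ∃! j' : Fin (2 * K + 1), ∀ j,
        (G j').1 j - (P i).1 j + (k : ℝ) * τ * ((G j').2 j - (P i).2 j) = 0)
    (w : Fin (2 * K + 1) → ℝ) (hw : ∀ i, 0 < w i)
    (β : ℝ) (hβ0 : 0 ≤ β) (hβ1 : ∀ i, β ≤ w i) :
    SameMeas K τ f_c
        ((∑ i, ((w i - β : ℝ) : ℂ) • cdirac (P i)) + ∑ j, ((β : ℝ) : ℂ) • cdirac (G j))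
        (∑ i, ((w i : ℂ)) • cdirac (P i)) ∧
      tvNorm ((∑ i, ((w i - β : ℝ) : ℂ) • cdirac (P i)) + ∑ j, ((β : ℝ) : ℂ) • cdirac (G j))
        = tvNorm (∑ i, ((w i : ℂ)) • cdirac (P i)) :=
  ghost_perturbation_same_measurements_and_tv_general τ f_c P G hpos huniq w β hβ0 hβ1

end
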